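/- Let A ∈ ℂ^{m×N}, X ∈ ℂ^{N×N}, and x ∈ ℂ^N supported on S. If (i) the matrix P_S X A* A P_S* is injective, and (ii) for every l ∈ S^c one has |⟨(P_S X A* A P_S*)^{-1} P_S X A* A e_l, sgn(x_S)⟩| < 1, then x is the unique solution of the basis pursuit problem min{‖z‖₁ : A z = A x}. -/

import Mathlib

open scoped ENNReal
open Matrix MeasureTheory ProbabilityTheory

/-- The operator norm of a matrix viewed as a map `(ℂ^β, ℓᵖ) → (ℂ^α, ℓᵖ)`. -/
noncomputable def opNorm (p : ℝ≥0∞) [Fact (1 ≤ p)] {α β : Type*} [Fintype α] [Fintype β]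
    [DecidableEq β] (M : Matrix α β ℂ) : ℝ :=
  ‖LinearMap.toContinuousLinearMap
    ((WithLp.linearEquiv p ℂ (α → ℂ)).symm.toLinearMap ∘ₗ
     Matrix.toLin' M ∘ₗ (WithLp.linearEquiv p ℂ (β → ℂ)).toLinearMap)‖

/-- The Euclidean (ℓ²) norm of a finitely-indexed complex vector. -/
noncomputable def l2norm {α : Type*} [Fintype α] (v : α → ℂ) : ℝ :=
  Real.sqrt (∑ i, ‖v i‖ ^ 2)

/-- Complex sign: `w/|w|` for `w ≠ 0`, and `0` for `w = 0`. -/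
noncomputable def csgn (w : ℂ) : ℂ := if w = 0 then 0 else w / (‖w‖ : ℂ)
open scoped Classical in
/-- Proposition 4.1: injectivity of P_S X A* A P_S* together with the strict
dual-certificate inequality implies x is the unique basis-pursuit solution. -/
theorem bp_unique_of_injective_and_cert (m N : ℕ) (A : Matrix (Fin m) (Fin N) ℂ)
    (X : Matrix (Fin N) (Fin N) ℂ) (x : Fin N → ℂ)
    (hi : Function.Injective fun v : {j // x j ≠ 0} → ℂ =>
      ((X * Aᴴ * A).submatrix (fun j : {j // x j ≠ 0} => j.val)
        (fun j : {j // x j ≠ 0} => j.val)).mulVec v)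
    (hii : ∀ l, x l = 0 →
      ‖(∑ j : {j // x j ≠ 0},
        (starRingEnd ℂ) ((((X * Aᴴ * A).submatrix (fun j : {j // x j ≠ 0} => j.val)
            (fun j : {j // x j ≠ 0} => j.val))⁻¹).mulVec
          (fun j : {j // x j ≠ 0} => (X * Aᴴ * A) j.val l) j) * csgn (x j.val))‖ < 1) :
    ∀ z : Fin N → ℂ, A.mulVec z = A.mulVec x → z ≠ x →
      ∑ i, ‖x i‖ < ∑ i, ‖z i‖ := by
  classical
  -- abbreviations
  set S := {j : Fin N // x j ≠ 0} with hS
  set B := X * Aᴴ * A with hB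
  set M := B.submatrix (fun j : S => j.val) (fun j : S => j.val) with hM
  have hMunit : IsUnit M := Matrix.mulVec_injective_iff_isUnit.mp hi
  have hMinv : M⁻¹ * M = 1 :=
    Matrix.nonsing_inv_mul M ((Matrix.isUnit_iff_isUnit_det M).mp hMunit)
  set s : S → ℂ := fun j => csgn (x j.val) with hs
  set u : Fin N → ℂ := fun l =>
    ∑ j : S, (starRingEnd ℂ) ((M⁻¹.mulVec (fun j : S => B j.val l)) j) * s j with hu
  have hu_lt : ∀ l, x l = 0 → ‖u l‖ < 1 := hii
  -- sign lemma
  have hcs : ∀ w : ℂ, (starRingEnd ℂ) (csgn w) * w = (‖w‖ : ℂ) := by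
    intro w
    by_cases h : w = 0
    · simp [csgn, h]
    · have habs : (‖w‖ : ℂ) ≠ 0 := by
        simpa using (norm_ne_zero_iff.mpr h)
      simp only [csgn, if_neg h]
      rw [map_div₀, Complex.conj_ofReal, div_mul_eq_mul_div, Complex.conj_mul',
        div_eq_iff habs]
      ring
  have habs_cs : ∀ w : ℂ, ‖csgn w‖ ≤ 1 := by
    intro w
    by_cases h : w = 0
    · simp [csgn, h]
    · simp [csgn, h, norm_div, Complex.norm_real, abs_of_nonneg (norm_nonneg w),
        div_self (norm_ne_zero_iff.mpr h)]
  -- on the support, u agrees with the sign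
  have huS : ∀ l (hl : x l ≠ 0), u l = csgn (x l) := by
    intro l hl
    have hc : (fun j : S => B j.val l) = M.mulVec (Pi.single (⟨l, hl⟩ : S) 1) := by
      funext j
      simp [hM, Matrix.mulVec, dotProduct, Pi.single_apply]
      rw [Finset.sum_ite_eq', if_pos (Finset.mem_univ _)]
    rw [hu]
    simp only [hc, Matrix.mulVec_mulVec, hMinv, Matrix.one_mulVec]
    rw [Finset.sum_eq_single (⟨l, hl⟩ : S)]
    · simp [hs]
    · intro b _ hb
      simp [Pi.single_apply, hb]
    · intro h; exact absurd (Finset.mem_univ _) h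
  have hu_le : ∀ l, ‖u l‖ ≤ 1 := by
    intro l
    by_cases hl : x l = 0
    · exact (hu_lt l hl).le
    · rw [huS l hl]; exact habs_cs _
  -- orthogonality of u against the kernel of B
  have key : ∀ d : Fin N → ℂ, B.mulVec d = 0 →
      ∑ l, (starRingEnd ℂ) (u l) * d l = 0 := by
    intro d hd
    have expand : ∑ l, (starRingEnd ℂ) (u l) * d l
        = ∑ j : S, (starRingEnd ℂ) (s j) *
            (M⁻¹.mulVec (fun k : S => B.mulVec d k.val)) j := by
      simp only [hu, map_sum, _root_.map_mul, RingHomCompTriple.comp_apply, Complex.conj_conj,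
        Matrix.mulVec, dotProduct, Finset.sum_mul, Finset.mul_sum]
      rw [Finset.sum_comm]
      refine Finset.sum_congr rfl fun j _ => ?_
      rw [Finset.sum_comm]
      refine Finset.sum_congr rfl fun k _ => ?_
      refine Finset.sum_congr rfl fun l _ => ?_
      simp only [RingHom.id_apply]
      ring
    rw [expand, hd]
    have h0 : (fun k : S => (0 : Fin N → ℂ) ↑k) = 0 := rfl
    rw [h0, Matrix.mulVec_zero]
    simp
  intro z hz hne
  -- the difference lies in ker B
  have hAd : A.mulVec (z - x) = 0 := by
    rw [Matrix.mulVec_sub, hz, sub_self]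
  have hBd : B.mulVec (z - x) = 0 := by
    rw [hB, ← Matrix.mulVec_mulVec, hAd, Matrix.mulVec_zero]
  have horth := key (z - x) hBd
  have hsum_eq : ∑ l, (starRingEnd ℂ) (u l) * z l = ∑ l, (starRingEnd ℂ) (u l) * x l := by
    have h : ∑ l, ((starRingEnd ℂ) (u l) * z l - (starRingEnd ℂ) (u l) * x l) = 0 := by
      rw [← horth]
      refine Finset.sum_congr rfl fun l _ => ?_
      simp [mul_sub]
    rw [Finset.sum_sub_distrib] at h
    exact sub_eq_zero.mp h
  -- ∑ conj(u) x = ‖x‖₁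
  have hux : ∑ l, (starRingEnd ℂ) (u l) * x l = ((∑ i, ‖x i‖ : ℝ) : ℂ) := by
    push_cast
    refine Finset.sum_congr rfl fun l _ => ?_
    by_cases hl : x l = 0
    · simp [hl]
    · rw [huS l hl, hcs]
  -- the ℓ¹ comparison
  have hterm_le : ∀ l, ((starRingEnd ℂ) (u l) * z l).re ≤ ‖z l‖ := by
    intro l
    calc ((starRingEnd ℂ) (u l) * z l).re ≤ ‖(starRingEnd ℂ) (u l) * z l‖ :=
          Complex.re_le_norm _
      _ = ‖u l‖ * ‖z l‖ := by
          rw [norm_mul, Complex.norm_conj]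
      _ ≤ 1 * ‖z l‖ :=
          mul_le_mul_of_nonneg_right (hu_le l) (norm_nonneg _)
      _ = ‖z l‖ := one_mul _
  have hxz : ∑ i, ‖x i‖ = ∑ l, ((starRingEnd ℂ) (u l) * z l).re := by
    have := congrArg Complex.re (hsum_eq.trans hux)
    simp only [Complex.ofReal_re, Complex.re_sum] at this
    linarith
  by_contra hcon
  push_neg at hcon
  -- equality forces termwise equality
  have hall : ∀ l, ((starRingEnd ℂ) (u l) * z l).re = ‖z l‖ := by
    have hsum_le : ∑ l, ‖z l‖ ≤ ∑ l, ((starRingEnd ℂ) (u l) * z l).re := by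
      rw [← hxz]; exact hcon
    intro l
    by_contra hne2
    have hlt : ((starRingEnd ℂ) (u l) * z l).re < ‖z l‖ :=
      lt_of_le_of_ne (hterm_le l) hne2
    have : ∑ i, ((starRingEnd ℂ) (u i) * z i).re < ∑ i, ‖z i‖ := by
      refine Finset.sum_lt_sum (fun i _ => hterm_le i) ⟨l, Finset.mem_univ l, hlt⟩
    linarith
  -- off the support, z vanishes
  have hzoff : ∀ l, x l = 0 → z l = 0 := by
    intro l hl
    by_contra hzl
    have h1 : ((starRingEnd ℂ) (u l) * z l).re ≤ ‖u l‖ * ‖z l‖ := by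
      calc ((starRingEnd ℂ) (u l) * z l).re ≤ ‖(starRingEnd ℂ) (u l) * z l‖ :=
            Complex.re_le_norm _
        _ = ‖u l‖ * ‖z l‖ := by rw [norm_mul, Complex.norm_conj]
    have h2 : ‖u l‖ * ‖z l‖ < 1 * ‖z l‖ :=
      mul_lt_mul_of_pos_right (hu_lt l hl) (norm_pos_iff.mpr hzl)
    rw [one_mul] at h2
    have := hall l
    linarith
  -- conclude z = x using injectivity
  have hdz : ∀ l, x l = 0 → (z - x) l = 0 := by
    intro l hl
    simp [hzoff l hl, hl]
  have hres : M.mulVec (fun j : S => (z - x) j.val) = 0 := by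
    funext j
    have h0 : (B.mulVec (z - x)) j.val = 0 := congrFun hBd j.val
    have hsplit : M.mulVec (fun k : S => (z - x) k.val) j = (B.mulVec (z - x)) j.val := by
      simp only [Matrix.mulVec, dotProduct, hM, Matrix.submatrix_apply]
      calc ∑ k : S, B j.val k.val * (z - x) k.val
          = ∑ l ∈ Finset.univ.filter (fun l => x l ≠ 0), B j.val l * (z - x) l := by
            rw [← Finset.sum_subtype_eq_sum_filter (fun l => B j.val l * (z - x) l)
              (p := fun l => x l ≠ 0), Finset.subtype_univ]
        _ = ∑ l, B j.val l * (z - x) l := by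
            refine Finset.sum_filter_of_ne fun l _ hne0 => ?_
            intro hxl
            exact hne0 (by simp [hdz l hxl])
    rw [hsplit, h0]; rfl
  have hzero : (fun j : S => (z - x) j.val) = 0 := by
    have := hi (a₁ := fun j : S => (z - x) j.val) (a₂ := 0)
    apply this
    simp only [hres, Matrix.mulVec_zero]
  have : z = x := by
    funext l
    by_cases hl : x l = 0
    · rw [hzoff l hl, hl]
    · have := congrFun hzero (⟨l, hl⟩ : S)
      simpa [sub_eq_zero] using this
  exact hne this
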